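/- arXiv:1111.4626 — 2 statements merged into one kernel-verified Lean document; each statement's English description precedes it below -/
import Mathlib

section
/- For β > 0, α > 0, and s > 0, the integral ∫₀¹ log₂(1 + (β/α)·s²τ/(1+sτ)) dτ equals [1 + (s + (β/α)s²)^{-1}]·log₂(1 + s + (β/α)s²) − (1 + 1/s)·log₂(1+s). -/
/-!
Since `1 + c s² τ / (1 + s τ) = (1 + a τ) / (1 + s τ)` with `c = β / α` and `a = s + c s²`, the integrand splits
as `log₂ (1 + a τ) - log₂ (1 + s τ)`, and the substitution `x = 1 + b τ` reduces
`∫₀¹ log (1 + b τ) dτ` to `b⁻¹ ∫₁^{1+b} log x dx = (1 + b⁻¹) log (1 + b) - 1`.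
The two constants `-1 / log 2` cancel.
-/

open Real intervalIntegral

lemma one_add_mul_pos_of_mem_Icc {b τ : ℝ} (hb : -1 < b) (hτ : τ ∈ Set.Icc (0 : ℝ) 1) :
    0 < 1 + b * τ := by
  obtain ⟨h0, h1⟩ := hτ
  nlinarith [mul_nonneg h0 (by linarith : (0 : ℝ) ≤ 1 + b), mul_nonneg (sub_nonneg.2 h1) h0]

lemma intervalIntegrable_logb_one_add_mul {b : ℝ} (hb : -1 < b) :
    IntervalIntegrable (fun τ => logb 2 (1 + b * τ)) MeasureTheory.volume 0 1 := by
  refine ContinuousOn.intervalIntegrable (ContinuousOn.logb (by fun_prop) fun τ hτ => ?_)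
  rw [Set.uIcc_of_le zero_le_one] at hτ
  exact (one_add_mul_pos_of_mem_Icc hb hτ).ne'

lemma integral_log_one_add_mul {b : ℝ} (hb : b ≠ 0) :
    ∫ τ in (0 : ℝ)..1, log (1 + b * τ) = (1 + b⁻¹) * log (1 + b) - 1 := by
  rw [integral_comp_add_mul log hb 1, integral_log]
  simp only [mul_zero, add_zero, mul_one, log_one, smul_eq_mul]
  field_simp
  ring

lemma integral_logb_one_add_mul {b : ℝ} (hb : b ≠ 0) :
    ∫ τ in (0 : ℝ)..1, logb 2 (1 + b * τ) = (1 + b⁻¹) * logb 2 (1 + b) - (log 2)⁻¹ := by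
  simp only [logb, integral_div, integral_log_one_add_mul hb]
  ring

/-- Closed-form evaluation of the low-SNR rate integral:
`∫₀¹ log₂(1 + (β/α)s²τ/(1+sτ)) dτ
  = [1 + (s + (β/α)s²)⁻¹]·log₂(1 + s + (β/α)s²) − (1 + 1/s)·log₂(1+s)`. -/
theorem stmt7 (β α s : ℝ) (hβ : 0 < β) (hα : 0 < α) (hs : 0 < s) :
    ∫ τ in (0 : ℝ)..1, Real.logb 2 (1 + (β / α) * s ^ 2 * τ / (1 + s * τ)) =
      (1 + (s + (β / α) * s ^ 2)⁻¹) * Real.logb 2 (1 + s + (β / α) * s ^ 2) -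
        (1 + 1 / s) * Real.logb 2 (1 + s) := by
  set c := β / α
  set a := s + c * s ^ 2
  have ha : 0 < a := by positivity
  have hsplit : ∫ τ in (0 : ℝ)..1, logb 2 (1 + c * s ^ 2 * τ / (1 + s * τ)) =
      ∫ τ in (0 : ℝ)..1, (logb 2 (1 + a * τ) - logb 2 (1 + s * τ)) := by
    refine integral_congr fun τ hτ => ?_
    rw [Set.uIcc_of_le zero_le_one] at hτ
    have hsτ := one_add_mul_pos_of_mem_Icc (b := s) (by linarith) hτ
    have haτ := one_add_mul_pos_of_mem_Icc (b := a) (by linarith) hτ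
    have hfrac : 1 + c * s ^ 2 * τ / (1 + s * τ) = (1 + a * τ) / (1 + s * τ) := by
      field_simp
      ring
    simp only [hfrac, logb_div haτ.ne' hsτ.ne']
  rw [add_assoc, hsplit, integral_sub (intervalIntegrable_logb_one_add_mul (by linarith))
    (intervalIntegrable_logb_one_add_mul (by linarith)), integral_logb_one_add_mul ha.ne',
    integral_logb_one_add_mul hs.ne']
  ring
end

section
/- Define R(s) = [1 + (s + c·s²)^{-1}]·log₂(1 + s + c·s²) − (1 + 1/s)·log₂(1+s) for s > 0 and constant c = β/α > 0. Then R(s) = c·s²/(2·ln 2) + O(s³) as s → 0⁺. -/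
/-! With `φ(x) = (1 + x⁻¹) log (1 + x)` one has `R(s) = (φ(s + cs²) − φ(s)) / ln 2`.
Multiplying the cubic Taylor polynomial of `log (1 + x)` by `(1 + x) / x` gives
`φ(x) = 1 + x/2 − x²/6 + O(x³)`, and the increment of this polynomial from `s` to `s + cs²`
is `cs²/2 + O(s³)`. -/

open Real

lemma abs_log_one_add_sub_taylor_le {x : ℝ} (hx : |x| < 1) :
    |log (1 + x) - (x - x ^ 2 / 2 + x ^ 3 / 3)| ≤ |x| ^ 4 / (1 - |x|) := by
  have h := abs_log_sub_add_sum_range_le (x := -x) (by rwa [abs_neg]) 3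
  simp only [Finset.sum_range_succ, Finset.sum_range_zero, abs_neg, sub_neg_eq_add] at h
  convert h using 2
  push_cast
  ring

lemma abs_one_add_inv_mul_log_one_add_sub_le {x : ℝ} (hx0 : x ≠ 0) (hx : |x| ≤ 1 / 2) :
    |(1 + x⁻¹) * log (1 + x) - (1 + x / 2 - x ^ 2 / 6)| ≤ 4 * |x| ^ 3 := by
  set E := log (1 + x) - (x - x ^ 2 / 2 + x ^ 3 / 3)
  have hE : |E| ≤ |x| ^ 4 / (1 - |x|) := abs_log_one_add_sub_taylor_le (by linarith)
  have hE' : |E| ≤ 2 * |x| ^ 4 := by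
    refine hE.trans ?_
    rw [div_le_iff₀ (by linarith)]
    nlinarith [pow_nonneg (abs_nonneg x) 4]
  -- `(1 + x)(x - x²/2 + x³/3) = x + x²/2 - x³/6 + x⁴/3`
  have key : (1 + x⁻¹) * log (1 + x) - (1 + x / 2 - x ^ 2 / 6) = x ^ 3 / 3 + (1 + x) * (E / x) := by
    simp only [E]
    field_simp
    ring
  have hEx : |E / x| ≤ 2 * |x| ^ 3 := by
    rw [abs_div, div_le_iff₀ (abs_pos.2 hx0)]
    linarith [show |x| ^ 4 = |x| ^ 3 * |x| by ring]
  rw [key]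
  calc |x ^ 3 / 3 + (1 + x) * (E / x)| ≤ |x| ^ 3 / 3 + (1 + |x|) * (2 * |x| ^ 3) := by
        refine (abs_add_le _ _).trans (add_le_add ?_ ?_)
        · rw [abs_div, abs_pow]; norm_num
        · rw [abs_mul]
          exact mul_le_mul ((abs_add_le _ _).trans (by simp)) hEx (abs_nonneg _) (by positivity)
    _ ≤ 4 * |x| ^ 3 := by nlinarith [pow_nonneg (abs_nonneg x) 3]

lemma abs_one_add_inv_mul_log_one_add_perturb_sub_le {c s : ℝ} (hc : 0 ≤ c) (hs : 0 < s)
    (hs4 : s ≤ 1 / 4) (hcs : c * s ≤ 1) :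
    |(1 + (s + c * s ^ 2)⁻¹) * log (1 + (s + c * s ^ 2)) - (1 + s⁻¹) * log (1 + s)
      - c * s ^ 2 / 2| ≤ (36 + c) * s ^ 3 := by
  set u := s + c * s ^ 2 with hu_def
  have hsu : s ≤ u := by nlinarith
  have hu2s : u ≤ 2 * s := by nlinarith
  have hupos : 0 < u := hs.trans_le hsu
  have hu := abs_one_add_inv_mul_log_one_add_sub_le hupos.ne'
    (by rw [abs_of_pos hupos]; linarith)
  have hs' := abs_one_add_inv_mul_log_one_add_sub_le hs.ne' (by rw [abs_of_pos hs]; linarith)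
  simp only [abs_of_pos hupos] at hu
  simp only [abs_of_pos hs] at hs'
  have hu3 : u ^ 3 ≤ 8 * s ^ 3 := by nlinarith [pow_le_pow_left₀ (by positivity) hu2s 3]
  have hquad : 0 ≤ c * s ^ 3 * (2 + c * s) / 6 ∧ c * s ^ 3 * (2 + c * s) / 6 ≤ c * s ^ 3 / 2 := by
    constructor
    · positivity
    · nlinarith [mul_nonneg hc (pow_nonneg hs.le 3)]
  have key : (1 + u⁻¹) * log (1 + u) - (1 + s⁻¹) * log (1 + s) - c * s ^ 2 / 2
      = ((1 + u⁻¹) * log (1 + u) - (1 + u / 2 - u ^ 2 / 6))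
        - ((1 + s⁻¹) * log (1 + s) - (1 + s / 2 - s ^ 2 / 6))
        - c * s ^ 3 * (2 + c * s) / 6 := by
    rw [hu_def]; ring
  rw [key, abs_le]
  have := abs_le.1 hu
  have := abs_le.1 hs'
  constructor <;> nlinarith

/-- With `R(s) = [1 + (s + cs²)⁻¹]·log₂(1 + s + cs²) − (1 + 1/s)·log₂(1+s)` and `c > 0`,
one has `R(s) = c·s²/(2 ln 2) + O(s³)` as `s → 0⁺`. -/
theorem stmt8 (c : ℝ) (hc : 0 < c) (R : ℝ → ℝ)
    (hR : ∀ s : ℝ, 0 < s →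
      R s = (1 + (s + c * s ^ 2)⁻¹) * Real.logb 2 (1 + s + c * s ^ 2) -
        (1 + 1 / s) * Real.logb 2 (1 + s)) :
    ∃ δ > (0 : ℝ), ∃ K > (0 : ℝ), ∀ s : ℝ, 0 < s → s < δ →
      |R s - c * s ^ 2 / (2 * Real.log 2)| ≤ K * s ^ 3 := by
  have hlog2 : 0 < log 2 := log_pos one_lt_two
  refine ⟨min (1 / 4) (1 / c), by positivity, (36 + c) / log 2, by positivity, ?_⟩
  intro s hs hsδ
  have hs4 : s ≤ 1 / 4 := (hsδ.trans_le (min_le_left _ _)).le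
  have hcs : c * s ≤ 1 := by
    have := hsδ.trans_le (min_le_right _ _)
    rw [lt_div_iff₀ hc] at this
    linarith
  have hRs : R s - c * s ^ 2 / (2 * log 2) =
      ((1 + (s + c * s ^ 2)⁻¹) * log (1 + (s + c * s ^ 2)) - (1 + s⁻¹) * log (1 + s)
        - c * s ^ 2 / 2) / log 2 := by
    rw [hR s hs, logb, logb, add_assoc, one_div]
    ring
  rw [hRs, abs_div, abs_of_pos hlog2, div_mul_eq_mul_div]
  gcongr
  exact abs_one_add_inv_mul_log_one_add_perturb_sub_le hc.le hs hs4 hcs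
end
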